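/- A hedgegraph G = (V, E) is k-partition connected (|δ(P)| ≥ k(|P| − 1) for all partitions P of V) if and only if E contains k pairwise disjoint subsets E_1, ..., E_k such that each sub-hedgegraph (V, E_i) is 1-partition connected. -/

import Mathlib

/-!
`fH hedge F = |V| - #components(V, F)` is a normalized, monotone, submodular function on sets of
hedges (the number of classes of an equivalence relation is supermodular along joins), so it
induces a matroid with rank `r F = min_{X ⊆ F} (#(F \ X) + fH hedge X)`. Comparing a partition
with the components of the hedges it does not cut shows that `F` is 1-partition connected iff
`r F ≥ |V| - 1`, and that `k`-partition connectivity of `E` gives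
`k * r E ≤ #(E \ T) + k * r T` for every `T`. By Edmonds' matroid intersection theorem, applied
to the `k`-fold direct sum of this matroid and the partition matroid on `E × Fin k`, that is
exactly the condition for `E` to contain `k` disjoint spanning sets. Conversely, the cuts of
disjoint hedge sets are disjoint.
-/

open Finset

attribute [local instance] Classical.propDecidable

noncomputable section

variable {V E : Type*}

/-- The simple graph on `V` induced by the hyperedges of the hedges in `A`. -/
def hgGraph (hedge : E → Finset (Finset V)) (A : Finset E) : SimpleGraph V where
  Adj u v := u ≠ v ∧ ∃ e ∈ A, ∃ h ∈ hedge e, u ∈ h ∧ v ∈ h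
  symm := ⟨by
    rintro u v ⟨hne, e, he, h, hh, hu, hv⟩
    exact ⟨hne.symm, e, he, h, hh, hv, hu⟩⟩
  loopless := ⟨by rintro u ⟨hne, -⟩; exact hne rfl⟩

/-- Number of connected components of the sub-hedgegraph `(V, A)`. -/
def comps (hedge : E → Finset (Finset V)) (A : Finset E) : ℕ :=
  Nat.card (hgGraph hedge A).ConnectedComponent

/-- The hedgegraph polymatroid `f(A) = |V| - #Comps(V,A)`. -/
def fH [Fintype V] (hedge : E → Finset (Finset V)) (A : Finset E) : ℕ :=
  Fintype.card V - comps hedge A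

/-- Hedges of `F` crossing the partition `P`: those containing a hyperedge intersecting
at least two parts. -/
def hedgeCut [Fintype V] [DecidableEq V] (hedge : E → Finset (Finset V)) (F : Finset E)
    (P : Finpartition (univ : Finset V)) : Finset E :=
  F.filter fun e => ∃ h ∈ hedge e, ∃ p ∈ P.parts, ∃ q ∈ P.parts,
    p ≠ q ∧ (h ∩ p).Nonempty ∧ (h ∩ q).Nonempty

structure IsPolymatroid {α : Type*} [DecidableEq α] (f : Finset α → ℕ) : Prop where
  empty : f ∅ = 0
  mono : Monotone f
  submod : ∀ A B, f (A ∪ B) + f (A ∩ B) ≤ f A + f B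

structure IsMatroidRank {α : Type*} [DecidableEq α] (r : Finset α → ℕ) : Prop
    extends IsPolymatroid r where
  le_card : ∀ A, r A ≤ A.card

namespace IsPolymatroid

variable {α : Type*} [DecidableEq α] {f : Finset α → ℕ}

lemma insert_le (hf : IsPolymatroid f) (A : Finset α) (e : α) :
    f (insert e A) ≤ f A + f {e} := by
  have := hf.submod A {e}
  rw [union_singleton] at this
  omega

end IsPolymatroid

namespace IsMatroidRank

variable {α : Type*} [DecidableEq α] {r : Finset α → ℕ}

lemma singleton_le_one (hr : IsMatroidRank r) (e : α) : r {e} ≤ 1 :=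
  (hr.le_card {e}).trans_eq (card_singleton e)

lemma singleton_le (hr : IsMatroidRank r) {A : Finset α} {e : α} (he : e ∈ A) : r {e} ≤ r A :=
  hr.mono (singleton_subset_iff.mpr he)

lemma contract (hr : IsMatroidRank r) (e : α) :
    IsMatroidRank (fun X => r (insert e X) - r {e}) where
  empty := by simp
  mono A B hAB := by
    dsimp only
    have := hr.mono (insert_subset_insert e hAB)
    omega
  submod A B := by
    have key := hr.submod (insert e A) (insert e B)
    rw [← insert_union_distrib, ← insert_inter_distrib] at key
    have := hr.singleton_le (mem_insert_self e (A ∪ B))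
    have := hr.singleton_le (mem_insert_self e (A ∩ B))
    have := hr.singleton_le (mem_insert_self e A)
    have := hr.singleton_le (mem_insert_self e B)
    omega
  le_card A := by
    have := hr.insert_le A e
    have := hr.le_card A
    omega

end IsMatroidRank

section MatroidIntersection

variable {α : Type*} [DecidableEq α] {r₁ r₂ : Finset α → ℕ} {G : Finset α} {e : α} {p : ℕ}

lemma forall_le_erase_of_loop (h₁ : IsPolymatroid r₁) (h₂ : IsPolymatroid r₂) (he : e ∈ G)
    (hloop : r₁ {e} = 0 ∨ r₂ {e} = 0) (hp : ∀ A ⊆ G, p ≤ r₁ A + r₂ (G \ A)) :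
    ∀ A ⊆ G.erase e, p ≤ r₁ A + r₂ (G.erase e \ A) := by
  intro A hA
  have heA : e ∉ A := fun h => (mem_erase.mp (hA h)).1 rfl
  rcases hloop with hloop | hloop
  · have := hp (insert e A) (insert_subset he (hA.trans (erase_subset e G)))
    rw [sdiff_insert, ← erase_sdiff_comm] at this
    have := h₁.insert_le A e
    omega
  · have := hp A (hA.trans (erase_subset e G))
    rw [← insert_erase (mem_sdiff.mpr ⟨he, heA⟩), ← erase_sdiff_comm] at this
    have := h₂.insert_le (G.erase e \ A) e
    omega

lemma forall_le_erase_or_forall_le_contract (h₁ : IsMatroidRank r₁) (h₂ : IsMatroidRank r₂)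
    (he : e ∈ G) (hp : ∀ A ⊆ G, p ≤ r₁ A + r₂ (G \ A)) :
    (∀ A ⊆ G.erase e, p ≤ r₁ A + r₂ (G.erase e \ A)) ∨
      ∀ A ⊆ G.erase e,
        p - 1 ≤ (r₁ (insert e A) - r₁ {e}) + (r₂ (insert e (G.erase e \ A)) - r₂ {e}) := by
  refine or_iff_not_imp_left.mpr fun hdel A₂ hA₂ => ?_
  push Not at hdel
  obtain ⟨A₁, hA₁, hlt⟩ := hdel
  -- Submodularity at `A₁, insert e A₂` and at their complements in `G`, with `hp` at
  -- `A₁ ∩ A₂` and `insert e (A₁ ∪ A₂)`, contradicts both failures.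
  have he₁ : e ∉ A₁ := fun h => (mem_erase.mp (hA₁ h)).1 rfl
  have he₂ : e ∉ A₂ := fun h => (mem_erase.mp (hA₂ h)).1 rfl
  have s₁ := h₁.submod A₁ (insert e A₂)
  rw [union_insert, inter_insert_of_notMem he₁] at s₁
  have s₂ := h₂.submod (G.erase e \ A₁) (insert e (G.erase e \ A₂))
  rw [show G.erase e \ A₁ ∪ insert e (G.erase e \ A₂) = G \ (A₁ ∩ A₂) by
      ext x; simp only [mem_union, mem_sdiff, mem_erase, mem_insert, mem_inter]; grind,
    show G.erase e \ A₁ ∩ insert e (G.erase e \ A₂) = G \ insert e (A₁ ∪ A₂) by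
      ext x; simp only [mem_inter, mem_sdiff, mem_erase, mem_insert, mem_union]; grind] at s₂
  have hp₁ := hp (A₁ ∩ A₂) (inter_subset_left.trans (hA₁.trans (erase_subset e G)))
  have hp₂ := hp (insert e (A₁ ∪ A₂))
    (insert_subset he ((union_subset hA₁ hA₂).trans (erase_subset e G)))
  have := h₁.singleton_le (mem_insert_self e A₂)
  have := h₂.singleton_le (mem_insert_self e (G.erase e \ A₂))
  have := h₁.singleton_le_one e
  have := h₂.singleton_le_one e
  omega

/-- Edmonds' matroid intersection theorem (the max ≥ min half), by induction on `G`: an element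
that is a loop of either matroid is deleted, otherwise it is deleted or contracted. -/
theorem exists_common_indep_of_le (h₁ : IsMatroidRank r₁) (h₂ : IsMatroidRank r₂)
    (hp : ∀ A ⊆ G, p ≤ r₁ A + r₂ (G \ A)) :
    ∃ I ⊆ G, r₁ I = I.card ∧ r₂ I = I.card ∧ p ≤ I.card := by
  induction G using Finset.strongInduction generalizing r₁ r₂ p with
  | H G ih =>
  obtain rfl | ⟨e, he⟩ := G.eq_empty_or_nonempty
  · refine ⟨∅, le_rfl, h₁.empty, h₂.empty, ?_⟩
    simpa [h₁.empty, h₂.empty] using hp ∅ le_rfl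
  have recurse_erase : (∀ A ⊆ G.erase e, p ≤ r₁ A + r₂ (G.erase e \ A)) →
      ∃ I ⊆ G, r₁ I = I.card ∧ r₂ I = I.card ∧ p ≤ I.card := fun hdel => by
    obtain ⟨I, hI, hI₁, hI₂, hpI⟩ := ih _ (erase_ssubset he) h₁ h₂ hdel
    exact ⟨I, hI.trans (erase_subset e G), hI₁, hI₂, hpI⟩
  by_cases hloop : r₁ {e} = 0 ∨ r₂ {e} = 0
  · exact recurse_erase
      (forall_le_erase_of_loop h₁.toIsPolymatroid h₂.toIsPolymatroid he hloop hp)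
  have he₁ : r₁ {e} = 1 := by have := h₁.singleton_le_one e; omega
  have he₂ : r₂ {e} = 1 := by have := h₂.singleton_le_one e; omega
  rcases forall_le_erase_or_forall_le_contract h₁ h₂ he hp with hdel | hcon
  · exact recurse_erase hdel
  obtain ⟨J, hJ, hJ₁, hJ₂, hpJ⟩ := ih _ (erase_ssubset he) (h₁.contract e) (h₂.contract e) hcon
  have heJ : e ∉ J := fun h => (mem_erase.mp (hJ h)).1 rfl
  refine ⟨insert e J, insert_subset he (hJ.trans (erase_subset e G)), ?_, ?_, ?_⟩ <;>
  · have := h₁.singleton_le (mem_insert_self e J)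
    have := h₂.singleton_le (mem_insert_self e J)
    rw [card_insert_of_notMem heJ]
    omega

end MatroidIntersection

lemma isMatroidRank_card_image {α β : Type*} [DecidableEq α] [DecidableEq β] (f : β → α) :
    IsMatroidRank fun A : Finset β => (A.image f).card where
  empty := by simp
  mono _ _ h := card_le_card (image_subset_image h)
  submod A B := by
    rw [image_union, ← card_union_add_card_inter (A.image f)]
    gcongr
    exact image_inter_subset f A B
  le_card _ := card_image_le

section Layer

variable {α ι : Type*} [Fintype α] [DecidableEq α] [DecidableEq ι]

def layer (A : Finset (α × ι)) (i : ι) : Finset α := univ.filter fun x => (x, i) ∈ A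

@[simp]
lemma mem_layer {A : Finset (α × ι)} {i : ι} {x : α} : x ∈ layer A i ↔ (x, i) ∈ A := by
  simp [layer]

lemma layer_mono {A B : Finset (α × ι)} (h : A ⊆ B) (i : ι) : layer A i ⊆ layer B i :=
  fun _ hx => mem_layer.mpr (h (mem_layer.mp hx))

lemma sum_card_layer [Fintype ι] (A : Finset (α × ι)) : ∑ i, (layer A i).card = A.card := by
  rw [card_eq_sum_card_fiberwise (f := Prod.snd) (t := univ) fun _ _ => mem_univ _]
  refine sum_congr rfl fun i _ => card_nbij' (·, i) Prod.fst (fun x hx => by simp_all)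
    (fun ⟨a, j⟩ hx => by aesop) (fun _ _ => rfl) (fun ⟨a, j⟩ hx => by simp_all)

lemma IsMatroidRank.sum_layer [Fintype ι] {r : Finset α → ℕ} (hr : IsMatroidRank r) :
    IsMatroidRank fun A : Finset (α × ι) => ∑ i, r (layer A i) where
  empty := by simp [layer, hr.empty]
  mono _ _ h := sum_le_sum fun i _ => hr.mono (layer_mono h i)
  submod A B := by
    rw [← sum_add_distrib, ← sum_add_distrib]
    refine sum_le_sum fun i _ => ?_
    have hu : layer (A ∪ B) i = layer A i ∪ layer B i := by ext; simp
    have hi : layer (A ∩ B) i = layer A i ∩ layer B i := by ext; simp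
    rw [hu, hi]
    exact hr.submod _ _
  le_card A := (sum_le_sum fun i _ => hr.le_card _).trans_eq (sum_card_layer A)

end Layer

/-- Base packing (Edmonds, Nash-Williams): matroid intersection of the `k`-fold direct sum of
the matroid with the partition matroid on `α × Fin k` that allows each `x` only once. -/
theorem IsMatroidRank.exists_pairwise_disjoint_spanning {α : Type*} [Fintype α] [DecidableEq α]
    {r : Finset α → ℕ} (hr : IsMatroidRank r) (k : ℕ)
    (h : ∀ T, k * r univ ≤ (univ \ T).card + k * r T) :
    ∃ Es : Fin k → Finset α, Pairwise (Function.onFun Disjoint Es) ∧ ∀ i, r (Es i) = r univ := by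
  have hbound : ∀ A ⊆ (univ : Finset (α × Fin k)),
      k * r univ ≤ ∑ i, r (layer A i) + ((univ \ A).image Prod.fst).card := by
    intro A _
    set T := univ.filter fun x => ∀ i, (x, i) ∈ A
    have hT : univ \ T ⊆ (univ \ A).image Prod.fst := fun x hx => by
      obtain ⟨i, hi⟩ : ∃ i, (x, i) ∉ A := by simpa [T] using hx
      exact mem_image.mpr ⟨(x, i), by simpa using hi, rfl⟩
    calc k * r univ ≤ (univ \ T).card + ∑ _i : Fin k, r T := by simpa using h T
      _ ≤ ((univ \ A).image Prod.fst).card + ∑ i, r (layer A i) :=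
        add_le_add (card_le_card hT) (sum_le_sum fun i _ => hr.mono fun x hx => by
          simpa using (mem_filter.mp hx).2 i)
      _ = _ := add_comm _ _
  obtain ⟨I, -, hI₁, hI₂, hkI⟩ :=
    exists_common_indep_of_le hr.sum_layer (isMatroidRank_card_image Prod.fst) hbound
  have hinj : Set.InjOn Prod.fst (I : Set (α × Fin k)) := injOn_of_card_image_eq hI₂
  refine ⟨layer I, fun i j hij => disjoint_left.mpr fun x hxi hxj => hij ?_, fun i => ?_⟩
  · exact congrArg Prod.snd (hinj (mem_layer.mp hxi) (mem_layer.mp hxj) rfl)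
  · have hle : ∀ j ∈ univ, r (layer I j) ≤ r univ := fun j _ => hr.mono (subset_univ _)
    refine (sum_eq_sum_iff_of_le hle).mp (le_antisymm (sum_le_sum hle) ?_) i (mem_univ i)
    simpa [hI₁] using hkI

section InducedRank

variable {α : Type*} [DecidableEq α]

lemma card_union_sdiff_add_card_inter_sdiff_le (A B X Y : Finset α) :
    ((A ∪ B) \ (X ∪ Y)).card + ((A ∩ B) \ (X ∩ Y)).card ≤ (A \ X).card + (B \ Y).card := by
  rw [← card_union_add_card_inter, ← card_union_add_card_inter (A \ X)]
  refine add_le_add (card_le_card fun z => ?_) (card_le_card fun z => ?_) <;>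
  · simp only [mem_union, mem_inter, mem_sdiff]; tauto

/-- The rank function of the matroid induced by `f`: its independent sets are the `I` with
`#J ≤ f J` for every nonempty `J ⊆ I`. -/
def inducedRank (f : Finset α → ℕ) (F : Finset α) : ℕ :=
  F.powerset.inf' (powerset_nonempty F) fun X => (F \ X).card + f X

variable {f : Finset α → ℕ}

lemma inducedRank_le {F X : Finset α} (hX : X ⊆ F) : inducedRank f F ≤ (F \ X).card + f X :=
  inf'_le _ (mem_powerset.mpr hX)

lemma inducedRank_le_self (F : Finset α) : inducedRank f F ≤ f F := by
  simpa using inducedRank_le (f := f) (subset_refl F)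

lemma exists_inducedRank_eq (f : Finset α → ℕ) (F : Finset α) :
    ∃ X ⊆ F, inducedRank f F = (F \ X).card + f X := by
  obtain ⟨X, hX, h⟩ := exists_mem_eq_inf' (powerset_nonempty F) fun X => (F \ X).card + f X
  exact ⟨X, mem_powerset.mp hX, h⟩

lemma IsPolymatroid.isMatroidRank_inducedRank (hf : IsPolymatroid f) :
    IsMatroidRank (inducedRank f) where
  empty := by simpa [hf.empty] using inducedRank_le (f := f) (subset_refl ∅)
  mono A B hAB := by
    obtain ⟨X, -, hX⟩ := exists_inducedRank_eq f B
    calc inducedRank f A ≤ (A \ (X ∩ A)).card + f (X ∩ A) := inducedRank_le inter_subset_right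
      _ ≤ (B \ X).card + f X := by
        gcongr ?_ + ?_
        · refine card_le_card fun x hx => ?_
          simp only [mem_sdiff, mem_inter, not_and] at hx ⊢
          exact ⟨hAB hx.1, fun h => hx.2 h hx.1⟩
        · exact hf.mono inter_subset_left
      _ = inducedRank f B := hX.symm
  submod A B := by
    obtain ⟨X, hXA, hX⟩ := exists_inducedRank_eq f A
    obtain ⟨Y, hYB, hY⟩ := exists_inducedRank_eq f B
    have := inducedRank_le (f := f) (union_subset_union hXA hYB)
    have := inducedRank_le (f := f) (inter_subset_inter hXA hYB)
    have := hf.submod X Y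
    have := card_union_sdiff_add_card_inter_sdiff_le A B X Y
    omega
  le_card A := by simpa [hf.empty] using inducedRank_le (f := f) (empty_subset A)

end InducedRank

section NumClasses

variable {V : Type*}

def pairSetoid (a b : V) : Setoid V := Relation.EqvGen.setoid fun x y => x = a ∧ y = b

lemma pairSetoid_le_iff {a b : V} {s : Setoid V} : pairSetoid a b ≤ s ↔ s a b :=
  ⟨fun h => h (Relation.EqvGen.rel _ _ ⟨rfl, rfl⟩),
    fun h => Setoid.eqvGen_le fun _ _ ⟨hx, hy⟩ => hx ▸ hy ▸ h⟩

variable [Fintype V]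

lemma card_quotient_le_of_le {s t : Setoid V} (h : s ≤ t) :
    Nat.card (Quotient t) ≤ Nat.card (Quotient s) :=
  Nat.card_le_card_of_surjective (Setoid.map_of_le h) (Quotient.ind fun x => ⟨⟦x⟧, rfl⟩)

lemma card_quotient_sup_pair_lt {s : Setoid V} {a b : V} (hab : ¬ s a b) :
    Nat.card (Quotient (s ⊔ pairSetoid a b)) < Nat.card (Quotient s) := by
  have hle : s ≤ s ⊔ pairSetoid a b := le_sup_left
  simp only [Nat.card_eq_fintype_card]
  refine Fintype.card_lt_of_surjective_not_injective (Setoid.map_of_le hle)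
    (Quotient.ind fun x => ⟨⟦x⟧, rfl⟩) fun hinj => hab ?_
  refine Quotient.exact (@hinj ⟦a⟧ ⟦b⟧ (Quotient.sound ?_))
  exact (le_sup_right : pairSetoid a b ≤ _) (pairSetoid_le_iff.mp le_rfl)

/-- The classes of `s` other than that of `b` stay apart in `s ⊔ pairSetoid a b`, which is
finer than the kernel of `x ↦ if s x b then ⟦a⟧ else ⟦x⟧`. -/
lemma card_quotient_le_card_quotient_sup_pair_add_one (s : Setoid V) (a b : V) :
    Nat.card (Quotient s) ≤ Nat.card (Quotient (s ⊔ pairSetoid a b)) + 1 := by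
  let g : V → Quotient s := fun x => if s x b then ⟦a⟧ else ⟦x⟧
  have hs : s ≤ Setoid.ker g := fun {x y} hxy => by
    by_cases hx : s x b
    · simp [Setoid.ker_def, g, hx, s.trans (s.symm hxy) hx]
    · have hy : ¬ s y b := fun hy => hx (s.trans hxy hy)
      simpa [Setoid.ker_def, g, hx, hy] using Quotient.sound hxy
  have hab : Setoid.ker g a b := by
    by_cases ha : s a b <;> simp [Setoid.ker_def, g]
  have hle : s ⊔ pairSetoid a b ≤ Setoid.ker g := sup_le hs (pairSetoid_le_iff.mpr hab)
  let h : Quotient (s ⊔ pairSetoid a b) → Quotient s :=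
    Quotient.lift g fun _ _ hxy => hle hxy
  have hsub : univ.erase ⟦b⟧ ⊆ univ.image h := by
    rintro ⟨x⟩ hx
    have hxb : ¬ s x b := fun hxb => (mem_erase.mp hx).1 (Quotient.sound hxb)
    exact mem_image.mpr ⟨⟦x⟧, mem_univ _, if_neg hxb⟩
  have := (card_le_card hsub).trans card_image_le
  rw [card_erase_of_mem (mem_univ _), card_univ, card_univ] at this
  simp only [Nat.card_eq_fintype_card]
  omega

lemma card_quotient_sup_pair_add_le {s t : Setoid V} (h : s ≤ t) (a b : V) :
    Nat.card (Quotient (s ⊔ pairSetoid a b)) + Nat.card (Quotient t) ≤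
      Nat.card (Quotient (t ⊔ pairSetoid a b)) + Nat.card (Quotient s) := by
  by_cases hs : s a b
  · rw [sup_eq_left.mpr (pairSetoid_le_iff.mpr hs), sup_eq_left.mpr (pairSetoid_le_iff.mpr (h hs)),
      add_comm]
  have := card_quotient_sup_pair_lt hs
  by_cases ht : t a b
  · rw [sup_eq_left.mpr (pairSetoid_le_iff.mpr ht)]
    omega
  · have := card_quotient_le_card_quotient_sup_pair_add_one t a b
    omega

lemma eq_sup_pairSetoid (u : Setoid V) :
    u = (univ.filter fun p : V × V => u p.1 p.2).sup fun p => pairSetoid p.1 p.2 :=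
  le_antisymm (Setoid.le_def.mpr fun {x y} hxy => le_sup (f := fun p : V × V => pairSetoid p.1 p.2)
      (mem_filter.mpr ⟨mem_univ (x, y), hxy⟩) (pairSetoid_le_iff.mp le_rfl))
    (Finset.sup_le fun _ hp => pairSetoid_le_iff.mpr (mem_filter.mp hp).2)

theorem card_quotient_sup_add_le {s t : Setoid V} (h : s ≤ t) (u : Setoid V) :
    Nat.card (Quotient (s ⊔ u)) + Nat.card (Quotient t) ≤
      Nat.card (Quotient (t ⊔ u)) + Nat.card (Quotient s) := by
  rw [eq_sup_pairSetoid u]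
  induction univ.filter (fun p : V × V => u p.1 p.2) using Finset.induction generalizing s t with
  | empty => simp only [sup_empty, sup_bot_eq]; omega
  | insert p L _ ih =>
    rw [sup_insert, ← sup_assoc, ← sup_assoc]
    have := card_quotient_sup_pair_add_le h p.1 p.2
    have := ih (sup_le_sup_right h (pairSetoid p.1 p.2))
    omega

end NumClasses

lemma SimpleGraph.reachableSetoid_le_iff {V : Type*} (G : SimpleGraph V) (s : Setoid V) :
    G.reachableSetoid ≤ s ↔ ∀ u v, G.Adj u v → s u v := by
  refine ⟨fun h u v huv => h huv.reachable, fun h => Setoid.le_def.mpr fun {u v} huv => ?_⟩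
  replace huv := (SimpleGraph.reachable_iff_reflTransGen u v).mp huv
  induction huv with
  | refl => exact s.refl u
  | tail _ hadj ih => exact s.trans ih (h _ _ hadj)

section Hedgegraph

variable (hedge : E → Finset (Finset V))

lemma reachableSetoid_hgGraph_le_iff {A : Finset E} {s : Setoid V} :
    (hgGraph hedge A).reachableSetoid ≤ s ↔
      ∀ e ∈ A, ∀ h ∈ hedge e, ∀ x ∈ h, ∀ y ∈ h, s x y := by
  rw [SimpleGraph.reachableSetoid_le_iff]
  refine ⟨fun H e he h hh x hx y hy => ?_,
    fun H x y ⟨_, e, he, h, hh, hx, hy⟩ => H e he h hh x hx y hy⟩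
  by_cases hxy : x = y
  · exact hxy ▸ s.refl x
  · exact H x y ⟨hxy, e, he, h, hh, hx, hy⟩

lemma hgGraph_mono {A B : Finset E} (h : A ⊆ B) : hgGraph hedge A ≤ hgGraph hedge B := by
  rintro x y ⟨hxy, e, he, hrest⟩
  exact ⟨hxy, e, h he, hrest⟩

lemma reachableSetoid_hgGraph_mono {A B : Finset E} (h : A ⊆ B) :
    (hgGraph hedge A).reachableSetoid ≤ (hgGraph hedge B).reachableSetoid :=
  fun _ _ hxy => hxy.mono (hgGraph_mono hedge h)

lemma comps_eq_card_quotient (A : Finset E) :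
    comps hedge A = Nat.card (Quotient (hgGraph hedge A).reachableSetoid) := rfl

lemma reachableSetoid_hgGraph_union [DecidableEq E] (A B : Finset E) :
    (hgGraph hedge (A ∪ B)).reachableSetoid =
      (hgGraph hedge A).reachableSetoid ⊔ (hgGraph hedge B).reachableSetoid := by
  refine le_antisymm ?_ (sup_le (reachableSetoid_hgGraph_mono hedge subset_union_left)
    (reachableSetoid_hgGraph_mono hedge subset_union_right))
  refine (reachableSetoid_hgGraph_le_iff hedge).mpr fun e he h hh x hx y hy => ?_
  rcases mem_union.mp he with he | he
  · exact (le_sup_left : _ ≤ (hgGraph hedge A).reachableSetoid ⊔ _)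
      ((reachableSetoid_hgGraph_le_iff hedge).mp le_rfl e he h hh x hx y hy)
  · exact (le_sup_right : _ ≤ _ ⊔ (hgGraph hedge B).reachableSetoid)
      ((reachableSetoid_hgGraph_le_iff hedge).mp le_rfl e he h hh x hx y hy)

variable [Fintype V]

lemma comps_le_card (A : Finset E) : comps hedge A ≤ Fintype.card V :=
  (Nat.card_le_card_of_surjective _ Quot.mk_surjective).trans_eq Nat.card_eq_fintype_card

lemma fH_le_card_sub_one (A : Finset E) : fH hedge A ≤ Fintype.card V - 1 := by
  rcases isEmpty_or_nonempty V with hV | hV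
  · simp [fH]
  · have : 0 < comps hedge A := Nat.card_pos
    unfold fH
    omega

lemma comps_empty : comps hedge ∅ = Fintype.card V := by
  have : (hgGraph hedge ∅).reachableSetoid = ⊥ := by
    refine le_antisymm ((reachableSetoid_hgGraph_le_iff hedge).mpr fun e he => ?_) bot_le
    simp at he
  rw [comps_eq_card_quotient, this, Nat.card_congr Setoid.quotientBotEquiv,
    Nat.card_eq_fintype_card]

lemma isPolymatroid_fH [DecidableEq E] : IsPolymatroid (fH hedge) where
  empty := by simp [fH, comps_empty]
  mono A B h := Nat.sub_le_sub_left
    (card_quotient_le_of_le (reachableSetoid_hgGraph_mono hedge h)) _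
  submod A B := by
    have := card_quotient_sup_add_le
      (reachableSetoid_hgGraph_mono hedge (inter_subset_left : A ∩ B ⊆ A))
      (hgGraph hedge B).reachableSetoid
    rw [← reachableSetoid_hgGraph_union, ← reachableSetoid_hgGraph_union,
      union_eq_right.mpr inter_subset_right] at this
    have := comps_le_card hedge A
    have := comps_le_card hedge B
    have := comps_le_card hedge (A ∪ B)
    have := comps_le_card hedge (A ∩ B)
    simp only [fH, comps_eq_card_quotient] at *
    omega

end Hedgegraph

section FinpartitionSetoid

variable {V : Type*} [Fintype V]

lemma card_quotient_ker {β : Type*} [DecidableEq β] (f : V → β) :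
    Nat.card (Quotient (Setoid.ker f)) = (univ.image f).card := by
  rw [Nat.card_congr (Setoid.quotientKerEquivRange f), ← Set.image_univ, ← coe_univ, ← coe_image,
    Nat.card_coe_set_eq, Set.ncard_coe_finset]

variable [DecidableEq V]

lemma Finpartition.image_part_univ (P : Finpartition (univ : Finset V)) :
    univ.image P.part = P.parts := by
  ext p
  refine ⟨fun hp => ?_, fun hp => ?_⟩
  · obtain ⟨x, -, rfl⟩ := mem_image.mp hp
    exact P.part_mem.mpr (mem_univ x)
  · obtain ⟨x, hx⟩ := P.nonempty_of_mem_parts hp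
    exact mem_image.mpr ⟨x, mem_univ x, P.part_eq_of_mem hp hx⟩

lemma card_quotient_ker_part (P : Finpartition (univ : Finset V)) :
    Nat.card (Quotient (Setoid.ker P.part)) = P.parts.card := by
  rw [card_quotient_ker, P.image_part_univ]

lemma ker_part_ofSetoid (s : Setoid V) [DecidableRel s] :
    Setoid.ker (Finpartition.ofSetoid s).part = s := by
  ext x y
  rw [Setoid.ker_def,
    ← (Finpartition.ofSetoid s).mem_part_iff_part_eq_part (mem_univ x) (mem_univ y),
    Finpartition.mem_part_ofSetoid_iff_rel]
  exact ⟨s.symm, s.symm⟩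

end FinpartitionSetoid

section PartitionConnectivity

variable [Fintype V] [DecidableEq V] (hedge : E → Finset (Finset V))

def IsPartitionConnected (k : ℕ) (F : Finset E) : Prop :=
  ∀ P : Finpartition (univ : Finset V), k * (P.parts.card - 1) ≤ (hedgeCut hedge F P).card

lemma isPartitionConnected_one_iff {F : Finset E} :
    IsPartitionConnected hedge 1 F ↔
      ∀ P : Finpartition (univ : Finset V), P.parts.card - 1 ≤ (hedgeCut hedge F P).card := by
  simp [IsPartitionConnected]

lemma hedgeCut_mono {F F' : Finset E} (h : F ⊆ F') (P : Finpartition (univ : Finset V)) :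
    hedgeCut hedge F P ⊆ hedgeCut hedge F' P :=
  filter_subset_filter _ h

lemma mem_hedgeCut {F : Finset E} {P : Finpartition (univ : Finset V)} {e : E} :
    e ∈ hedgeCut hedge F P ↔ e ∈ F ∧ ∃ h ∈ hedge e, ∃ x ∈ h, ∃ y ∈ h, P.part x ≠ P.part y := by
  rw [hedgeCut, mem_filter]
  refine and_congr_right fun _ => ⟨?_, ?_⟩
  · rintro ⟨h, hh, p, hp, q, hq, hpq, ⟨x, hx⟩, ⟨y, hy⟩⟩
    rw [mem_inter] at hx hy
    exact ⟨h, hh, x, hx.1, y, hy.1, by rwa [P.part_eq_of_mem hp hx.2, P.part_eq_of_mem hq hy.2]⟩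
  · rintro ⟨h, hh, x, hx, y, hy, hxy⟩
    exact ⟨h, hh, _, P.part_mem.mpr (mem_univ x), _, P.part_mem.mpr (mem_univ y), hxy,
      ⟨x, mem_inter.mpr ⟨hx, P.mem_part (mem_univ x)⟩⟩,
      ⟨y, mem_inter.mpr ⟨hy, P.mem_part (mem_univ y)⟩⟩⟩

lemma hedgeCut_subset (F : Finset E) (P : Finpartition (univ : Finset V)) :
    hedgeCut hedge F P ⊆ F :=
  filter_subset _ F

variable [DecidableEq E]

lemma hedgeCut_subset_sdiff {F X : Finset E} {P : Finpartition (univ : Finset V)}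
    (hX : (hgGraph hedge X).reachableSetoid ≤ Setoid.ker P.part) :
    hedgeCut hedge F P ⊆ F \ X := fun e he => by
  obtain ⟨heF, h, hh, x, hx, y, hy, hxy⟩ := (mem_hedgeCut hedge).mp he
  exact mem_sdiff.mpr ⟨heF, fun heX =>
    hxy ((reachableSetoid_hgGraph_le_iff hedge).mp hX e heX h hh x hx y hy)⟩

lemma reachableSetoid_hgGraph_sdiff_hedgeCut_le (F : Finset E)
    (P : Finpartition (univ : Finset V)) :
    (hgGraph hedge (F \ hedgeCut hedge F P)).reachableSetoid ≤ Setoid.ker P.part := by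
  refine (reachableSetoid_hgGraph_le_iff hedge).mpr fun e he h hh x hx y hy => ?_
  obtain ⟨heF, hcut⟩ := mem_sdiff.mp he
  by_contra hxy
  exact hcut ((mem_hedgeCut hedge).mpr ⟨heF, h, hh, x, hx, y, hy, hxy⟩)

lemma inducedRank_fH_le (F : Finset E) (P : Finpartition (univ : Finset V)) :
    inducedRank (fH hedge) F ≤ (hedgeCut hedge F P).card + (Fintype.card V - P.parts.card) := by
  have hcomps : P.parts.card ≤ comps hedge (F \ hedgeCut hedge F P) := by
    rw [← card_quotient_ker_part]
    exact card_quotient_le_of_le (reachableSetoid_hgGraph_sdiff_hedgeCut_le hedge F P)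
  have := inducedRank_le (f := fH hedge) (sdiff_subset : F \ hedgeCut hedge F P ⊆ F)
  rw [Finset.sdiff_sdiff_eq_self (hedgeCut_subset hedge F P)] at this
  exact this.trans (Nat.add_le_add_left (Nat.sub_le_sub_left hcomps _) _)

lemma IsPartitionConnected.mul_le {k : ℕ} {F : Finset E} (hF : IsPartitionConnected hedge k F)
    (T : Finset E) : k * (Fintype.card V - 1) ≤ (F \ T).card + k * inducedRank (fH hedge) T := by
  obtain rfl | hk := k.eq_zero_or_pos
  · simp
  obtain ⟨X, -, hX⟩ := exists_inducedRank_eq (fH hedge) T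
  set P := Finpartition.ofSetoid (hgGraph hedge X).reachableSetoid
  have hP : P.parts.card = comps hedge X :=
    (card_quotient_ker_part P).symm.trans (by rw [ker_part_ofSetoid]; rfl)
  have hcut := card_le_card (hedgeCut_subset_sdiff hedge (F := F) (X := X) (ker_part_ofSetoid _).ge)
  have hsplit : (F \ X).card ≤ (F \ T).card + (T \ X).card := by
    refine (card_le_card fun e he => ?_).trans (card_union_le _ _)
    by_cases heT : e ∈ T <;> simp_all
  have := comps_le_card hedge X
  calc k * (Fintype.card V - 1) ≤ k * (P.parts.card - 1) + k * fH hedge X := by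
        rw [← mul_add]
        exact Nat.mul_le_mul_left k (by unfold fH; omega)
    _ ≤ (F \ X).card + k * fH hedge X := Nat.add_le_add_right ((hF P).trans hcut) _
    _ ≤ (F \ T).card + k * inducedRank (fH hedge) T := by
        have := Nat.le_mul_of_pos_left (T \ X).card hk
        rw [hX, mul_add]
        omega

lemma isPartitionConnected_one_of_le_inducedRank {F : Finset E}
    (h : Fintype.card V - 1 ≤ inducedRank (fH hedge) F) : IsPartitionConnected hedge 1 F := by
  intro P
  have := inducedRank_fH_le hedge F P
  have := P.card_parts_le_card
  rw [card_univ] at this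
  omega

end PartitionConnectivity

section Decomposition

variable [Fintype V] [DecidableEq V] [Fintype E] [DecidableEq E] (hedge : E → Finset (Finset V))

theorem IsPartitionConnected.exists_pairwise_disjoint {k : ℕ}
    (h : IsPartitionConnected hedge k univ) :
    ∃ Es : Fin k → Finset E, Pairwise (Function.onFun Disjoint Es) ∧
      ∀ i, IsPartitionConnected hedge 1 (Es i) := by
  have hrank : inducedRank (fH hedge) univ ≤ Fintype.card V - 1 :=
    (inducedRank_le_self univ).trans (fH_le_card_sub_one hedge univ)
  obtain ⟨Es, hdisj, hEs⟩ := (isPolymatroid_fH hedge).isMatroidRank_inducedRank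
    |>.exists_pairwise_disjoint_spanning k fun T =>
      (Nat.mul_le_mul_left k hrank).trans (h.mul_le hedge T)
  refine ⟨Es, hdisj, fun i => isPartitionConnected_one_of_le_inducedRank hedge ?_⟩
  have := h.mul_le hedge univ
  rw [sdiff_self, bot_eq_empty, card_empty, zero_add] at this
  rw [hEs i]
  exact Nat.le_of_mul_le_mul_left this i.pos

theorem isPartitionConnected_univ_of_pairwise_disjoint {k : ℕ} {Es : Fin k → Finset E}
    (hdisj : Pairwise (Function.onFun Disjoint Es)) (h : ∀ i, IsPartitionConnected hedge 1 (Es i)) :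
    IsPartitionConnected hedge k univ := by
  intro P
  calc k * (P.parts.card - 1) = ∑ _i : Fin k, 1 * (P.parts.card - 1) := by simp
    _ ≤ ∑ i, (hedgeCut hedge (Es i) P).card := sum_le_sum fun i _ => h i P
    _ = (univ.biUnion fun i => hedgeCut hedge (Es i) P).card :=
      (card_biUnion fun i _ j _ hij =>
        (hdisj hij).mono (hedgeCut_subset hedge _ P) (hedgeCut_subset hedge _ P)).symm
    _ ≤ (hedgeCut hedge univ P).card :=
      card_le_card (biUnion_subset.mpr fun i _ => hedgeCut_mono hedge (subset_univ _) P)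

end Decomposition

theorem k_partition_connected_iff_disjoint_decomposition_general [Fintype V] [DecidableEq V]
    [Fintype E] (hedge : E → Finset (Finset V)) (k : ℕ) :
    (∀ P : Finpartition (univ : Finset V),
        k * (P.parts.card - 1) ≤ (hedgeCut hedge univ P).card) ↔
      ∃ Es : Fin k → Finset E, Pairwise (Function.onFun Disjoint Es) ∧
        ∀ i, ∀ P : Finpartition (univ : Finset V),
          P.parts.card - 1 ≤ (hedgeCut hedge (Es i) P).card := by
  simp_rw [← isPartitionConnected_one_iff]
  exact ⟨IsPartitionConnected.exists_pairwise_disjoint hedge,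
    fun ⟨_, hdisj, hEs⟩ => isPartitionConnected_univ_of_pairwise_disjoint hedge hdisj hEs⟩

/-- A hedgegraph is `k`-partition connected iff it contains `k`
pairwise disjoint hedge sets, each of whose sub-hedgegraph is `1`-partition connected. -/
theorem k_partition_connected_iff_disjoint_decomposition [Fintype V] [DecidableEq V]
    [Fintype E] [DecidableEq E] (hedge : E → Finset (Finset V)) (k : ℕ) :
    (∀ P : Finpartition (univ : Finset V),
        k * (P.parts.card - 1) ≤ (hedgeCut hedge univ P).card) ↔
      ∃ Es : Fin k → Finset E, Pairwise (Function.onFun Disjoint Es) ∧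
        ∀ i, ∀ P : Finpartition (univ : Finset V),
          P.parts.card - 1 ≤ (hedgeCut hedge (Es i) P).card :=
  k_partition_connected_iff_disjoint_decomposition_general hedge k

end
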